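/- arXiv:1109.4930 — 3 statements merged into one kernel-verified Lean document; each statement's English description precedes it below -/
import Mathlib

section
/- Assume d is bounded with θ ≤ 2, so that d_A and d_Am are metrics on A. Then d_A is a complete metric on A if and only if d is a complete metric on X, and likewise d_Am is complete if and only if d is complete. -/
/-- `ρ` is a metric: zero iff equal, symmetric, triangle inequality. -/
def IsMetric {α : Type*} (ρ : α → α → ℝ) : Prop :=
  (∀ x y, ρ x y = 0 ↔ x = y) ∧ (∀ x y, ρ x y = ρ y x) ∧
    ∀ x y z, ρ x z ≤ ρ x y + ρ y z

def IsCauchyWith {α : Type*} (ρ : α → α → ℝ) (S : ℕ → α) : Prop :=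
  ∀ ε : ℝ, 0 < ε → ∃ N : ℕ, ∀ m ≥ N, ∀ n ≥ N, ρ (S m) (S n) < ε

def TendsToWith {α : Type*} (ρ : α → α → ℝ) (S : ℕ → α) (l : α) : Prop :=
  ∀ ε : ℝ, 0 < ε → ∃ N : ℕ, ∀ n ≥ N, ρ (S n) l < ε

def IsCompleteWith {α : Type*} (ρ : α → α → ℝ) : Prop :=
  ∀ S : ℕ → α, IsCauchyWith ρ S → ∃ l, TendsToWith ρ S l

/-- the topology generated by the open balls of `ρ` -/
def topOf {α : Type*} (ρ : α → α → ℝ) : TopologicalSpace α :=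
  TopologicalSpace.generateFrom {s | ∃ (x : α) (ε : ℝ), s = {y | ρ x y < ε}}

/-- `sup d`, the supremum of all distances in `X` -/
noncomputable def supD (X : Type*) [MetricSpace X] : ℝ :=
  sSup {r : ℝ | ∃ x y : X, dist x y = r}

/-- The multiset distance `d_E`: enumerate `a` and `c` with multiplicity in all possible
orders; the shorter enumeration is matched against an initial part of the other, taking
the sum of the distances of matched pairs plus the notional part `M * |C(c) - C(a)|`;
`d_E` is the least such value. -/
noncomputable def dE {X : Type*} [MetricSpace X] (M : ℝ) (a c : Multiset X) : ℝ :=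
  sInf {r : ℝ | ∃ la lc : List X, (la : Multiset X) = a ∧ (lc : Multiset X) = c ∧
    r = (List.zipWith dist la lc).sum + M * |(c.card : ℝ) - (a.card : ℝ)|}

/-- `d_Em`, the mean version of `d_E` (equal to `0` on the pair of empty multisets). -/
noncomputable def dEm {X : Type*} [MetricSpace X] (M : ℝ) (a c : Multiset X) : ℝ :=
  dE M a c / (max a.card c.card : ℕ)

/-- The setoid on `X × ℕ` identifying all points of the form `(x, 0)`. -/
def ARel (X : Type*) : Setoid (X × ℕ) where
  r p q := p = q ∨ (p.2 = 0 ∧ q.2 = 0)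
  iseqv := by
    refine ⟨fun p => Or.inl rfl, ?_, ?_⟩
    · rintro p q (rfl | h)
      · exact Or.inl rfl
      · exact Or.inr ⟨h.2, h.1⟩
    · rintro p q r (rfl | h) (rfl | h') <;> tauto

/-- The space `A`: the quotient of `X × ℕ` identifying all `(x, 0)` to one point. -/
abbrev SpaceA (X : Type*) : Type _ := Quotient (ARel X)

/-- The class `r eₓ` of `(x, r)` in `A`. -/
def aMk {X : Type*} (x : X) (r : ℕ) : SpaceA X := Quotient.mk (ARel X) (x, r)

/-- The distinguished point `e₀` of `A`. -/
noncomputable def e0A (X : Type*) [Nonempty X] : SpaceA X :=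
  aMk (Classical.arbitrary X) 0

/-- The multiplicity of a point of `A`. -/
def cardA {X : Type*} : SpaceA X → ℕ :=
  Quotient.lift (fun p => p.2) (by rintro p q (rfl | ⟨h1, h2⟩) <;> simp_all)

/-- The distance `d_A(r eₓ, t e_z) = M|t - r| + min r t * d(x,z)` on `A`. -/
noncomputable def dA {X : Type*} [MetricSpace X] (M : ℝ) : SpaceA X → SpaceA X → ℝ :=
  Quotient.lift₂
    (fun p q => M * |(q.2 : ℝ) - (p.2 : ℝ)| + (min p.2 q.2 : ℕ) * dist p.1 q.1)
    (by rintro p q p' q' (rfl | ⟨h1, h2⟩) (rfl | ⟨h3, h4⟩) <;> simp_all)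

/-- The mean distance `d_Am = d_A / max r t` on `A` (with value `0` at `(e₀, e₀)`). -/
noncomputable def dAm {X : Type*} [MetricSpace X] (M : ℝ) (u v : SpaceA X) : ℝ :=
  dA M u v / (max (cardA u) (cardA v) : ℕ)


section Aux

variable {X : Type*} [MetricSpace X]

lemma dA_mk (M : ℝ) (x z : X) (r t : ℕ) :
    dA M (aMk x r) (aMk z t)
      = M * |(t : ℝ) - (r : ℝ)| + ((min r t : ℕ) : ℝ) * dist x z := rfl

lemma dAm_mk (M : ℝ) (x z : X) (r t : ℕ) :
    dAm M (aMk x r) (aMk z t)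
      = (M * |(t : ℝ) - (r : ℝ)| + ((min r t : ℕ) : ℝ) * dist x z)
          / ((max r t : ℕ) : ℝ) := rfl

lemma rep_eqA (u : SpaceA X) : u = aMk u.out.1 u.out.2 := (Quotient.out_eq u).symm

lemma nat_eq_of_abs_lt {a b : ℕ} (h : |(a : ℝ) - (b : ℝ)| < 1) : a = b := by
  rw [abs_sub_lt_iff] at h
  have h1 : (a : ℝ) < (b : ℝ) + 1 := by linarith [h.1]
  have h2 : (b : ℝ) < (a : ℝ) + 1 := by linarith [h.2]
  have h1' : a < b + 1 := by exact_mod_cast h1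
  have h2' : b < a + 1 := by exact_mod_cast h2
  omega

lemma dA_complete_of [Nonempty X] (M : ℝ) (hM : 0 < M) (hX : CompleteSpace X) :
    IsCompleteWith (dA (X := X) M) := by
  intro S hS
  have hrep : ∀ n, ∃ (x : X) (r : ℕ), S n = aMk x r :=
    fun n => ⟨(S n).out.1, (S n).out.2, rep_eqA (S n)⟩
  choose x r hrep using hrep
  have hd : ∀ m n, dA M (S m) (S n)
      = M * |(r n : ℝ) - (r m : ℝ)| + ((min (r m) (r n) : ℕ) : ℝ) * dist (x m) (x n) := by
    intro m n; rw [hrep m, hrep n, dA_mk]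
  obtain ⟨N, hN⟩ := hS M hM
  have hrconst : ∀ n ≥ N, r n = r N := by
    intro n hn
    have h := hN N le_rfl n hn
    rw [hd] at h
    have h0 : (0:ℝ) ≤ ((min (r N) (r n) : ℕ) : ℝ) * dist (x N) (x n) :=
      mul_nonneg (by positivity) dist_nonneg
    have h1 : M * |(r n : ℝ) - (r N : ℝ)| < M := by linarith
    have h2 : |(r n : ℝ) - (r N : ℝ)| < 1 := by
      nlinarith [abs_nonneg ((r n : ℝ) - (r N : ℝ))]
    exact nat_eq_of_abs_lt h2
  rcases Nat.eq_zero_or_pos (r N) with hk | hk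
  · refine ⟨e0A X, fun ε hε => ⟨N, fun n hn => ?_⟩⟩
    have hSn : S n = e0A X := by
      rw [hrep n]
      exact Quotient.sound (Or.inr ⟨by simp [hrconst n hn, hk], rfl⟩)
    rw [hSn]
    have : dA M (e0A X) (e0A X) = 0 := by
      show dA M (aMk (Classical.arbitrary X) 0) (aMk (Classical.arbitrary X) 0) = 0
      rw [dA_mk]; simp
    rw [this]; exact hε
  · set k := r N with hkdef
    have hkpos : (0:ℝ) < (k : ℝ) := by exact_mod_cast hk
    -- shifted sequence is Cauchy in X
    have hyC : CauchySeq (fun n => x (n + N)) := by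
      rw [Metric.cauchySeq_iff]
      intro ε hε
      obtain ⟨N1, hN1⟩ := hS ((k : ℝ) * ε) (by positivity)
      refine ⟨N1, fun m hm n hn => ?_⟩
      have h := hN1 (m + N) (le_trans hm (Nat.le_add_right _ _))
        (n + N) (le_trans hn (Nat.le_add_right _ _))
      rw [hd] at h
      rw [hrconst (m + N) (Nat.le_add_left _ _), hrconst (n + N) (Nat.le_add_left _ _)] at h
      simp only [min_self] at h
      have : (k : ℝ) * dist (x (m + N)) (x (n + N)) < (k : ℝ) * ε := by
        simpa using h
      exact lt_of_mul_lt_mul_left this (le_of_lt hkpos)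
    obtain ⟨l, hl⟩ := cauchySeq_tendsto_of_complete hyC
    rw [Metric.tendsto_atTop] at hl
    refine ⟨aMk l k, fun ε hε => ?_⟩
    obtain ⟨N2, hN2⟩ := hl (ε / k) (by positivity)
    refine ⟨N2 + N, fun n hn => ?_⟩
    have hnN : n ≥ N := le_trans (Nat.le_add_left _ _) hn
    have hrn : r n = k := hrconst n hnN
    rw [hrep n, hrn, dA_mk]
    simp only [min_self, sub_self, abs_zero, mul_zero, zero_add]
    have hxy : x n = (fun m => x (m + N)) (n - N) := by
      simp [Nat.sub_add_cancel hnN]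
    have hdist : dist (x n) l < ε / k := by
      rw [hxy]; exact hN2 (n - N) (by omega)
    calc (k : ℝ) * dist (x n) l < (k : ℝ) * (ε / k) := by
          exact (mul_lt_mul_iff_right₀ hkpos).2 hdist
      _ = ε := by field_simp
  
lemma complete_of_dA [Nonempty X] (M : ℝ) (hM : 0 < M)
    (h : IsCompleteWith (dA (X := X) M)) : CompleteSpace X := by
  apply Metric.complete_of_cauchySeq_tendsto
  intro u hu
  have hcau : IsCauchyWith (dA (X := X) M) (fun n => aMk (u n) 1) := by
    intro ε hε
    obtain ⟨N, hN⟩ := Metric.cauchySeq_iff.1 hu ε hε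
    refine ⟨N, fun m hm n hn => ?_⟩
    rw [dA_mk]
    simpa using hN m hm n hn
  obtain ⟨l, hl⟩ := h _ hcau
  set y := l.out.1 with hy
  set t := l.out.2 with htd
  have hlr : l = aMk y t := rep_eqA l
  have ht : t = 1 := by
    by_contra hne
    obtain ⟨N, hN⟩ := hl M hM
    have h1 := hN N le_rfl
    rw [hlr, dA_mk, Nat.cast_one] at h1
    have habs : (1:ℝ) ≤ |(t : ℝ) - 1| := by
      rcases (by omega : t = 0 ∨ 2 ≤ t) with h' | h'
      · simp [h']
      · have h2 : (2:ℝ) ≤ (t : ℝ) := by exact_mod_cast h'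
        rw [abs_of_nonneg (by linarith)]; linarith
    have h0 : (0:ℝ) ≤ ((min 1 t : ℕ) : ℝ) * dist (u N) y :=
      mul_nonneg (by positivity) dist_nonneg
    linarith [mul_le_mul_of_nonneg_left habs (le_of_lt hM)]
  refine ⟨y, ?_⟩
  rw [Metric.tendsto_atTop]
  intro ε hε
  obtain ⟨N, hN⟩ := hl ε hε
  refine ⟨N, fun n hn => ?_⟩
  have := hN n hn
  rw [hlr, ht, dA_mk] at this
  simpa using this

lemma dAm_complete_of [Nonempty X] (M : ℝ) (hM : 0 < M) (hX : CompleteSpace X) :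
    IsCompleteWith (dAm (X := X) M) := by
  intro S hS
  have hrep : ∀ n, ∃ (x : X) (r : ℕ), S n = aMk x r :=
    fun n => ⟨(S n).out.1, (S n).out.2, rep_eqA (S n)⟩
  choose x r hrep using hrep
  have hd : ∀ m n, dAm M (S m) (S n)
      = (M * |(r n : ℝ) - (r m : ℝ)| + ((min (r m) (r n) : ℕ) : ℝ) * dist (x m) (x n))
          / ((max (r m) (r n) : ℕ) : ℝ) := by
    intro m n; rw [hrep m, hrep n, dAm_mk]
  obtain ⟨N0, hN0⟩ := hS (M / 2) (by linarith)
  -- value of dAm when exactly one multiplicity is zero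
  have hzero : ∀ m n, r m = 0 → 0 < r n → dAm M (S m) (S n) = M := by
    intro m n hm hn
    rw [hd, hm]
    have hne : ((r n : ℕ) : ℝ) ≠ 0 := by positivity
    simp only [Nat.cast_zero, sub_zero]
    rw [min_eq_left (Nat.zero_le _), max_eq_right (Nat.zero_le _)]
    rw [abs_of_nonneg (by positivity : (0:ℝ) ≤ (r n : ℝ))]
    simp
    field_simp
  rcases Nat.eq_zero_or_pos (r N0) with h0 | h0
  · -- all tail multiplicities are zero
    have hz : ∀ n ≥ N0, r n = 0 := by
      intro n hn
      by_contra hne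
      have hpos : 0 < r n := Nat.pos_of_ne_zero hne
      have h := hN0 N0 le_rfl n hn
      rw [hzero N0 n h0 hpos] at h
      linarith
    refine ⟨e0A X, fun ε hε => ⟨N0, fun n hn => ?_⟩⟩
    have hSn : S n = e0A X := by
      rw [hrep n]
      exact Quotient.sound (Or.inr ⟨by simp [hz n hn], rfl⟩)
    rw [hSn]
    have : dAm M (e0A X) (e0A X) = 0 := by
      show dAm M (aMk (Classical.arbitrary X) 0) (aMk (Classical.arbitrary X) 0) = 0
      rw [dAm_mk]; simp
    rw [this]; exact hε
  · -- tail multiplicities positive and bounded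
    have hpos : ∀ n ≥ N0, 0 < r n := by
      intro n hn
      by_contra hne
      have hn0 : r n = 0 := by omega
      have h := hN0 n hn N0 le_rfl
      rw [hzero n N0 hn0 h0] at h
      linarith
    have hbd : ∀ n ≥ N0, (r n : ℝ) < 2 * (r N0 : ℝ) := by
      intro n hn
      rcases le_or_gt (r n) (r N0) with hle | hlt
      · have h1 : ((r n : ℕ) : ℝ) ≤ (r N0 : ℝ) := by exact_mod_cast hle
        have h2 : (0:ℝ) < (r N0 : ℝ) := by exact_mod_cast h0
        linarith
      · have h := hN0 N0 le_rfl n hn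
        rw [hd] at h
        have hmax : max (r N0) (r n) = r n := max_eq_right (le_of_lt hlt)
        rw [hmax] at h
        have hrn : (0:ℝ) < (r n : ℝ) := by exact_mod_cast hpos n hn
        have h1 : M * |(r n : ℝ) - (r N0 : ℝ)|
            + ((min (r N0) (r n) : ℕ) : ℝ) * dist (x N0) (x n) < (M / 2) * (r n : ℝ) := by
          rw [div_lt_iff₀ hrn] at h; linarith
        have h2 : (0:ℝ) ≤ ((min (r N0) (r n) : ℕ) : ℝ) * dist (x N0) (x n) :=
          mul_nonneg (by positivity) dist_nonneg
        have h3 : (r N0 : ℝ) ≤ (r n : ℝ) := by exact_mod_cast le_of_lt hlt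
        rw [abs_of_nonneg (by linarith)] at h1
        nlinarith
    have hrN0pos : (0:ℝ) < (r N0 : ℝ) := by exact_mod_cast h0
    obtain ⟨N1', hN1'⟩ := hS (M / (2 * (r N0 : ℝ))) (by positivity)
    set N1 := max N0 N1' with hN1def
    have hN1a : N0 ≤ N1 := le_max_left _ _
    have hN1b : N1' ≤ N1 := le_max_right _ _
    have hrconst : ∀ n ≥ N1, r n = r N1 := by
      intro n hn
      have h := hN1' N1 hN1b n (le_trans hN1b hn)
      rw [hd] at h
      have hmaxpos : (0:ℝ) < ((max (r N1) (r n) : ℕ) : ℝ) := by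
        have := hpos N1 hN1a
        have h2 := hpos n (le_trans hN1a hn)
        have : 0 < max (r N1) (r n) := lt_max_of_lt_left this
        exact_mod_cast this
      rw [div_lt_iff₀ hmaxpos] at h
      have h2 : (0:ℝ) ≤ ((min (r N1) (r n) : ℕ) : ℝ) * dist (x N1) (x n) :=
        mul_nonneg (by positivity) dist_nonneg
      have hmaxlt : ((max (r N1) (r n) : ℕ) : ℝ) < 2 * (r N0 : ℝ) := by
        have b1 := hbd N1 hN1a
        have b2 := hbd n (le_trans hN1a hn)
        rcases max_cases (r N1) (r n) with ⟨he, _⟩ | ⟨he, _⟩ <;> rw [he]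
        · exact b1
        · exact b2
      have hrpos : (0:ℝ) < 2 * (r N0 : ℝ) := by linarith
      have hMd : M * |(r n : ℝ) - (r N1 : ℝ)| < M := by
        have step : M * |(r n : ℝ) - (r N1 : ℝ)|
            < (M / (2 * (r N0 : ℝ))) * ((max (r N1) (r n) : ℕ) : ℝ) := by linarith
        have step2 : (M / (2 * (r N0 : ℝ))) * ((max (r N1) (r n) : ℕ) : ℝ)
            < (M / (2 * (r N0 : ℝ))) * (2 * (r N0 : ℝ)) := by
          apply mul_lt_mul_of_pos_left hmaxlt
          positivity
        have step3 : (M / (2 * (r N0 : ℝ))) * (2 * (r N0 : ℝ)) = M := by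
          field_simp
        linarith
      have habs : |(r n : ℝ) - (r N1 : ℝ)| < 1 := by
        nlinarith [abs_nonneg ((r n : ℝ) - (r N1 : ℝ))]
      exact nat_eq_of_abs_lt habs
    set k := r N1 with hkdef
    have hkpos0 : 0 < k := hpos N1 hN1a
    have hkpos : (0:ℝ) < (k : ℝ) := by exact_mod_cast hkpos0
    -- on the tail, dAm is exactly dist
    have hdd : ∀ m ≥ N1, ∀ n ≥ N1, dAm M (S m) (S n) = dist (x m) (x n) := by
      intro m hm n hn
      rw [hd, hrconst m hm, hrconst n hn]
      simp only [min_self, max_self, sub_self, abs_zero, mul_zero, zero_add]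
      field_simp
    have hyC : CauchySeq (fun n => x (n + N1)) := by
      rw [Metric.cauchySeq_iff]
      intro ε hε
      obtain ⟨N2, hN2⟩ := hS ε hε
      refine ⟨N2, fun m hm n hn => ?_⟩
      have h := hN2 (m + N1) (le_trans hm (Nat.le_add_right _ _))
        (n + N1) (le_trans hn (Nat.le_add_right _ _))
      rwa [hdd _ (Nat.le_add_left _ _) _ (Nat.le_add_left _ _)] at h
    obtain ⟨l, hl⟩ := cauchySeq_tendsto_of_complete hyC
    rw [Metric.tendsto_atTop] at hl
    refine ⟨aMk l k, fun ε hε => ?_⟩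
    obtain ⟨N2, hN2⟩ := hl ε hε
    refine ⟨N2 + N1, fun n hn => ?_⟩
    have hnN : n ≥ N1 := le_trans (Nat.le_add_left _ _) hn
    rw [hrep n, hrconst n hnN, dAm_mk]
    simp only [min_self, max_self, sub_self, abs_zero, mul_zero, zero_add]
    have heq : (k : ℝ) * dist (x n) l / (k : ℝ) = dist (x n) l := by field_simp
    rw [heq]
    have hxy : x n = (fun m => x (m + N1)) (n - N1) := by
      simp [Nat.sub_add_cancel hnN]
    rw [hxy]
    exact hN2 (n - N1) (by omega)

lemma complete_of_dAm [Nonempty X] (M : ℝ) (hM : 0 < M)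
    (h : IsCompleteWith (dAm (X := X) M)) : CompleteSpace X := by
  apply Metric.complete_of_cauchySeq_tendsto
  intro u hu
  have hcau : IsCauchyWith (dAm (X := X) M) (fun n => aMk (u n) 1) := by
    intro ε hε
    obtain ⟨N, hN⟩ := Metric.cauchySeq_iff.1 hu ε hε
    refine ⟨N, fun m hm n hn => ?_⟩
    rw [dAm_mk]
    simpa using hN m hm n hn
  obtain ⟨l, hl⟩ := h _ hcau
  set y := l.out.1 with hy
  set t := l.out.2 with htd
  have hlr : l = aMk y t := rep_eqA l
  have ht : t = 1 := by
    by_contra hne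
    obtain ⟨N, hN⟩ := hl (M / 2) (by linarith)
    have h1 := hN N le_rfl
    rw [hlr, dAm_mk] at h1
    rcases (by omega : t = 0 ∨ 2 ≤ t) with h' | h'
    · rw [h'] at h1
      norm_num at h1
      linarith
    · have ht2 : (2:ℝ) ≤ (t : ℝ) := by exact_mod_cast h'
      have hmin : min 1 t = 1 := min_eq_left (by omega)
      have hmax : max 1 t = t := max_eq_right (by omega)
      rw [hmin, hmax] at h1
      rw [Nat.cast_one] at h1
      have habs : |(t : ℝ) - 1| = (t : ℝ) - 1 := abs_of_nonneg (by linarith)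
      rw [habs] at h1
      have htpos : (0:ℝ) < (t : ℝ) := by linarith
      rw [div_lt_iff₀ htpos] at h1
      nlinarith [mul_le_mul_of_nonneg_left ht2 (le_of_lt hM),
        dist_nonneg (x := u N) (y := y)]
  refine ⟨y, ?_⟩
  rw [Metric.tendsto_atTop]
  intro ε hε
  obtain ⟨N, hN⟩ := hl ε hε
  refine ⟨N, fun n hn => ?_⟩
  have := hN n hn
  rw [hlr, ht, dAm_mk] at this
  simpa using this

end Aux

/-- For `d` bounded with `(sup d)/M ≤ 2`, `d_A` is a complete metric on `A` iff `d`
is complete, and likewise for `d_Am`. -/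
theorem stmt_13 {X : Type*} [MetricSpace X] [Nontrivial X] (M : ℝ) (hM : 0 < M)
    (hbdd : ∃ B : ℝ, ∀ x y : X, dist x y ≤ B) (htheta : supD X / M ≤ 2) :
    (IsCompleteWith (dA (X := X) M) ↔ CompleteSpace X) ∧
    (IsCompleteWith (dAm (X := X) M) ↔ CompleteSpace X) := by
  haveI : Nonempty X := Nontrivial.to_nonempty
  exact ⟨⟨complete_of_dA M hM, dA_complete_of M hM⟩,
         ⟨complete_of_dAm M hM, dAm_complete_of M hM⟩⟩
end

section
/- Assume d is bounded with θ ≤ 2, so that d_A is a metric on A. A subset U of A is compact if and only if each U_r = U ∩ A_r is a compact subset of A_r and all but finitely many of the U_r are empty, where A_r denotes the image of X×{r} in A. -/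
/-- `A_r`, the image of `X × {r}` in `A`. -/
def Ar (X : Type*) (r : ℕ) : Set (SpaceA X) := {u | ∃ x : X, u = aMk x r}

lemma mem_Ar_iff' {X : Type*} (u : SpaceA X) (r : ℕ) : u ∈ Ar X r ↔ cardA u = r := by
  constructor
  · rintro ⟨x, rfl⟩; rfl
  · intro h
    induction u using Quotient.inductionOn with
    | h p => exact ⟨p.1, by rw [← h]; rfl⟩

lemma dA_self' {X : Type*} [MetricSpace X] (M : ℝ) (u : SpaceA X) : dA M u u = 0 := by
  induction u using Quotient.inductionOn with
  | h p => simp [dA]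

lemma cardA_eq_of_dA_lt' {X : Type*} [MetricSpace X] {M : ℝ} (hM : 0 < M)
    (u v : SpaceA X) (h : dA M u v < M) : cardA u = cardA v := by
  induction u using Quotient.inductionOn with
  | h p =>
    induction v using Quotient.inductionOn with
    | h q =>
      have h' : M * |(q.2 : ℝ) - (p.2 : ℝ)| + (min p.2 q.2 : ℕ) * dist p.1 q.1 < M := h
      have h2 : (0:ℝ) ≤ (min p.2 q.2 : ℕ) * dist p.1 q.1 :=
        mul_nonneg (Nat.cast_nonneg _) dist_nonneg
      have h3 : M * |(q.2 : ℝ) - (p.2 : ℝ)| < M * 1 := by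
        rw [mul_one]; linarith
      have h4 : |(q.2 : ℝ) - (p.2 : ℝ)| < 1 := lt_of_mul_lt_mul_left h3 hM.le
      have h5 : |((q.2 : ℤ) - (p.2 : ℤ) : ℤ)| < 1 := by
        have : |(((q.2:ℤ) - (p.2:ℤ) : ℤ) : ℝ)| < 1 := by push_cast; exact h4
        exact_mod_cast this
      have h6 := abs_lt.mp h5
      have : p.2 = q.2 := by omega
      show p.2 = q.2
      exact this

lemma isOpen_Ar' {X : Type*} [MetricSpace X] {M : ℝ} (hM : 0 < M) (r : ℕ) :
    @IsOpen _ (topOf (dA (X := X) M)) (Ar X r) := by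
  letI : TopologicalSpace (SpaceA X) := topOf (dA (X := X) M)
  have hball : ∀ u : SpaceA X, IsOpen {v | dA M u v < M} := fun u =>
    TopologicalSpace.isOpen_generateFrom_of_mem ⟨u, M, rfl⟩
  have : Ar X r = ⋃ u ∈ Ar X r, {v | dA M u v < M} := by
    ext v
    simp only [Set.mem_iUnion, Set.mem_setOf_eq]
    constructor
    · intro hv; exact ⟨v, hv, by rw [dA_self']; exact hM⟩
    · rintro ⟨u, hu, huv⟩
      rw [mem_Ar_iff'] at hu ⊢
      rw [← cardA_eq_of_dA_lt' hM u v huv]; exact hu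
  rw [this]
  exact isOpen_biUnion fun u _ => hball u

/-- For `d` bounded with `(sup d)/M ≤ 2` (so that `d_A` is a metric inducing the
topology of `A`), a subset `U` of `A` is compact iff each `U_r = U ∩ A_r` is compact
and all but finitely many of the `U_r` are empty. -/
theorem stmt_14 {X : Type*} [MetricSpace X] [Nontrivial X] (M : ℝ) (hM : 0 < M)
    (hbdd : ∃ B : ℝ, ∀ x y : X, dist x y ≤ B) (htheta : supD X / M ≤ 2)
    (U : Set (SpaceA X)) :
    @IsCompact _ (topOf (dA (X := X) M)) U ↔
      ((∀ r : ℕ, @IsCompact _ (topOf (dA (X := X) M)) (U ∩ Ar X r)) ∧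
        {r : ℕ | (U ∩ Ar X r).Nonempty}.Finite) := by
  letI : TopologicalSpace (SpaceA X) := topOf (dA (X := X) M)
  have hopen : ∀ r : ℕ, IsOpen (Ar X r) := fun r => isOpen_Ar' hM r
  have hclosed : ∀ r : ℕ, IsClosed (Ar X r) := by
    intro r
    rw [← isOpen_compl_iff]
    have : (Ar X r)ᶜ = ⋃ (t : ℕ) (_ : t ≠ r), Ar X t := by
      ext u
      simp only [Set.mem_compl_iff, Set.mem_iUnion, mem_Ar_iff']
      constructor
      · intro h; exact ⟨cardA u, h ∘ (· ▸ rfl), rfl⟩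
      · rintro ⟨t, ht, rfl⟩; exact ht
    rw [this]
    exact isOpen_biUnion fun t _ => hopen t
  constructor
  · intro hU
    refine ⟨fun r => hU.inter_right (hclosed r), ?_⟩
    have hcover : U ⊆ ⋃ r : ℕ, Ar X r := by
      intro u _
      exact Set.mem_iUnion.mpr ⟨cardA u, (mem_Ar_iff' u _).mpr rfl⟩
    obtain ⟨t, ht⟩ := hU.elim_finite_subcover (fun r : ℕ => Ar X r) hopen hcover
    apply Set.Finite.subset t.finite_toSet
    rintro r ⟨u, huU, hur⟩
    obtain ⟨s, hs, hus⟩ := Set.mem_iUnion₂.mp (ht huU)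
    rw [mem_Ar_iff'] at hur
    rw [mem_Ar_iff'] at hus
    rwa [← hur, hus]
  · rintro ⟨hcpt, hfin⟩
    have hU : U = ⋃ r ∈ {r : ℕ | (U ∩ Ar X r).Nonempty}, (U ∩ Ar X r) := by
      ext u
      simp only [Set.mem_iUnion, Set.mem_setOf_eq]
      constructor
      · intro hu
        have hmem : u ∈ Ar X (cardA u) := (mem_Ar_iff' u _).mpr rfl
        exact ⟨cardA u, ⟨u, hu, hmem⟩, hu, hmem⟩
      · rintro ⟨r, _, hu, _⟩; exact hu
    rw [hU]
    exact hfin.isCompact_biUnion fun r _ => hcpt r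
end

section
/- Assume d is bounded with θ ≤ 2 and that d is uniformly discrete, i.e. there exists a>0 with d(x,z) ≥ a whenever x ≠ z. Then the quotient pseudometric d_G is a metric on G, it is uniformly discrete, and it is a complete metric on G. -/
/-- The Hausdorff distance between two sets with respect to a distance function
`δ`: for finite nonempty `S`, `T` this is
`max (max_{s ∈ S} min_{t ∈ T} δ s t) (max_{t ∈ T} min_{s ∈ S} δ s t)`. -/
noncomputable def hausSet {α : Type*} (δ : α → α → ℝ) (S T : Set α) : ℝ :=
  max (sSup ((fun s => sInf ((fun t => δ s t) '' T)) '' S))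
    (sSup ((fun t => sInf ((fun s => δ s t) '' S)) '' T))

/-- `F'`, the collection of nonempty finite subsets of `A`. -/
abbrev FP (X : Type*) : Type _ := {S : Finset (SpaceA X) // S.Nonempty}

/-- `d_F`, the Hausdorff distance on `F'` induced by `d_A`. -/
noncomputable def dF {X : Type*} [MetricSpace X] (M : ℝ) (S T : FP X) : ℝ :=
  hausSet (dA M) (S.1 : Set (SpaceA X)) (T.1 : Set (SpaceA X))

/-- `d_Fm`, the Hausdorff distance on `F'` induced by `d_Am`. -/
noncomputable def dFm {X : Type*} [MetricSpace X] (M : ℝ) (S T : FP X) : ℝ :=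
  hausSet (dAm M) (S.1 : Set (SpaceA X)) (T.1 : Set (SpaceA X))

open Classical in
/-- The identification of a finite nonempty subset `S` of `X` with the element
`{1eₓ : x ∈ S}` of `F'`. -/
noncomputable def embF {X : Type*} (S : {S : Finset X // S.Nonempty}) : FP X :=
  ⟨S.1.image (fun x => aMk x 1), S.2.image _⟩

open Classical in
/-- The multiplicity contributed at `x : X` by a point of `A`. -/
noncomputable def wt {X : Type*} : SpaceA X → X → ℕ :=
  Quotient.lift (fun p x => if p.1 = x then p.2 else 0)
    (by rintro p q (rfl | ⟨h1, h2⟩)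
        · rfl
        · funext x; simp [h1, h2])

/-- `t_U : X → ℕ` for `U ∈ F'`: `t_U x = Σ_{r eₓ ∈ U} r`. -/
noncomputable def tU {X : Type*} (U : Finset (SpaceA X)) (x : X) : ℕ :=
  ∑ u ∈ U, wt u x

/-- The setoid on `F'` given by `U ~ V` iff `t_U = t_V`. -/
def GRel (X : Type*) : Setoid (FP X) where
  r U V := ∀ x : X, tU U.1 x = tU V.1 x
  iseqv := by
    refine ⟨fun U x => rfl, fun h x => (h x).symm, fun h h' x => (h x).trans (h' x)⟩

/-- The space `G = F'/~`. -/
abbrev GSp (X : Type*) : Type _ := Quotient (GRel X)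

/-- `t` descends to `G`. -/
noncomputable def tG {X : Type*} : GSp X → X → ℕ :=
  Quotient.lift (fun U => tU U.1) (by intro U V h; funext x; exact h x)

/-- The class `e₀ ∈ G` of `{e₀} ∈ F'`. -/
noncomputable def e0G (X : Type*) [Nonempty X] : GSp X :=
  Quotient.mk (GRel X) ⟨{e0A X}, Finset.singleton_nonempty _⟩

/-- `d_G`, the quotient pseudometric on `G` induced by `d_F`: the infimum of the
lengths `d_F(q₀,p₁) + d_F(q₁,p₂) + ⋯ + d_F(qₙ,pₙ₊₁)` of chains with `q₀ ∈ α`,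
`pₙ₊₁ ∈ β` and `pᵢ ~ qᵢ` for `1 ≤ i ≤ n`. -/
noncomputable def dG {X : Type*} [MetricSpace X] (M : ℝ) (α β : GSp X) : ℝ :=
  sInf {r : ℝ | ∃ (n : ℕ) (p q : ℕ → FP X),
    Quotient.mk (GRel X) (q 0) = α ∧ Quotient.mk (GRel X) (p (n + 1)) = β ∧
    (∀ i, 1 ≤ i → i ≤ n → (GRel X).r (p i) (q i)) ∧
    r = ∑ i ∈ Finset.range (n + 1), dF M (q i) (p (i + 1))}



section StmtHelpers

variable {X : Type*} [MetricSpace X]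

private lemma dA_mk' (M : ℝ) (p q : X × ℕ) :
    dA M (Quotient.mk (ARel X) p) (Quotient.mk (ARel X) q)
      = M * |(q.2 : ℝ) - (p.2 : ℝ)| + (min p.2 q.2 : ℕ) * dist p.1 q.1 := rfl

private lemma my_dA_nonneg {M : ℝ} (hM : 0 ≤ M) (u v : SpaceA X) : 0 ≤ dA M u v := by
  refine Quotient.inductionOn₂ u v fun p q => ?_
  rw [dA_mk']
  have h1 : 0 ≤ M * |(q.2 : ℝ) - (p.2 : ℝ)| := mul_nonneg hM (abs_nonneg _)
  have h2 : 0 ≤ ((min p.2 q.2 : ℕ) : ℝ) * dist p.1 q.1 :=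
    mul_nonneg (Nat.cast_nonneg _) dist_nonneg
  linarith

private lemma my_dA_self (M : ℝ) (u : SpaceA X) : dA M u u = 0 := by
  refine Quotient.inductionOn u fun p => ?_
  rw [dA_mk']; simp

private lemma my_dA_symm (M : ℝ) (u v : SpaceA X) : dA M u v = dA M v u := by
  refine Quotient.inductionOn₂ u v fun p q => ?_
  rw [dA_mk', dA_mk', abs_sub_comm, min_comm, dist_comm]

private lemma my_dA_sep {M a : ℝ} (hM : 0 < M) (ha : 0 < a)
    (hud : ∀ x z : X, x ≠ z → a ≤ dist x z) {u v : SpaceA X} (huv : u ≠ v) :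
    min M a ≤ dA M u v := by
  refine Quotient.inductionOn₂ u v (fun p q hne => ?_) huv
  rw [dA_mk']
  have hrel : ¬ ((p = q) ∨ (p.2 = 0 ∧ q.2 = 0)) := fun h => hne (Quotient.sound h)
  push_neg at hrel
  have h2 : 0 ≤ ((min p.2 q.2 : ℕ) : ℝ) * dist p.1 q.1 :=
    mul_nonneg (Nat.cast_nonneg _) dist_nonneg
  by_cases ht : p.2 = q.2
  · have hx : p.1 ≠ q.1 := fun h => hrel.1 (Prod.ext h ht)
    have hr1 : 1 ≤ p.2 := by
      rcases Nat.eq_zero_or_pos p.2 with h0 | h1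
      · exact absurd (ht ▸ h0) (hrel.2 h0)
      · exact h1
    have hmin : (1 : ℝ) ≤ ((min p.2 q.2 : ℕ) : ℝ) := by
      have : 1 ≤ min p.2 q.2 := le_min hr1 (ht ▸ hr1)
      exact_mod_cast this
    have hd := hud _ _ hx
    have hterm : a ≤ ((min p.2 q.2 : ℕ) : ℝ) * dist p.1 q.1 := by nlinarith
    have habs : 0 ≤ M * |(q.2 : ℝ) - (p.2 : ℝ)| := mul_nonneg hM.le (abs_nonneg _)
    calc min M a ≤ a := min_le_right _ _
      _ ≤ _ := by linarith
  · have hne2 : ((q.2 : ℤ) - (p.2 : ℤ)) ≠ 0 := by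
      intro h
      exact ht (by omega)
    have h1 : (1 : ℤ) ≤ |(q.2 : ℤ) - (p.2 : ℤ)| := Int.one_le_abs hne2
    have h1' : (1 : ℝ) ≤ |(q.2 : ℝ) - (p.2 : ℝ)| := by exact_mod_cast h1
    calc min M a ≤ M := min_le_left _ _
      _ ≤ M * |(q.2 : ℝ) - (p.2 : ℝ)| := le_mul_of_one_le_right hM.le h1'
      _ ≤ _ := by linarith

private lemma my_dF_nonneg {M : ℝ} (hM : 0 ≤ M) (S T : FP X) : 0 ≤ dF M S T := by
  obtain ⟨s0, hs0⟩ := S.2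
  have h1 : 0 ≤ sInf ((fun t => dA M s0 t) '' (T.1 : Set (SpaceA X))) :=
    Real.sInf_nonneg (by rintro r ⟨t, ht, rfl⟩; exact my_dA_nonneg hM _ _)
  have hfin : ((fun s => sInf ((fun t => dA M s t) '' (T.1 : Set (SpaceA X)))) ''
      (S.1 : Set (SpaceA X))).Finite := S.1.finite_toSet.image _
  have h2 : sInf ((fun t => dA M s0 t) '' (T.1 : Set (SpaceA X))) ≤
      sSup ((fun s => sInf ((fun t => dA M s t) '' (T.1 : Set (SpaceA X)))) ''
        (S.1 : Set (SpaceA X))) :=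
    le_csSup hfin.bddAbove (Set.mem_image_of_mem _ hs0)
  unfold dF hausSet
  exact le_max_of_le_left (h1.trans h2)

private lemma my_dF_self {M : ℝ} (hM : 0 ≤ M) (S : FP X) : dF M S S = 0 := by
  refine le_antisymm ?_ (my_dF_nonneg hM S S)
  refine max_le ?_ ?_
  · refine Real.sSup_le ?_ le_rfl
    rintro r ⟨s, hs, rfl⟩
    have hb : BddBelow ((fun t => dA M s t) '' (S.1 : Set (SpaceA X))) :=
      ⟨0, by rintro r ⟨t, ht, rfl⟩; exact my_dA_nonneg hM _ _⟩
    exact le_of_le_of_eq (csInf_le hb (Set.mem_image_of_mem _ hs)) (my_dA_self M s)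
  · refine Real.sSup_le ?_ le_rfl
    rintro r ⟨t, ht, rfl⟩
    have hb : BddBelow ((fun s => dA M s t) '' (S.1 : Set (SpaceA X))) :=
      ⟨0, by rintro r ⟨s, hs, rfl⟩; exact my_dA_nonneg hM _ _⟩
    exact le_of_le_of_eq (csInf_le hb (Set.mem_image_of_mem _ ht)) (my_dA_self M t)

private lemma img_symm (M : ℝ) (t : SpaceA X) (S : Set (SpaceA X)) :
    (fun s => dA M s t) '' S = (fun s => dA M t s) '' S := by
  ext r
  constructor <;> rintro ⟨s, hs, rfl⟩
  · exact ⟨s, hs, my_dA_symm M t s⟩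
  · exact ⟨s, hs, my_dA_symm M s t⟩

private lemma my_dF_symm (M : ℝ) (S T : FP X) : dF M S T = dF M T S := by
  unfold dF hausSet
  rw [max_comm]
  congr 1
  · exact congrArg _ (Set.image_congr fun x _ => congrArg _ (img_symm M x _))
  · exact congrArg _ (Set.image_congr fun x _ => congrArg _ (img_symm M x _).symm)

private lemma my_dF_sep {M a : ℝ} (hM : 0 < M) (ha : 0 < a)
    (hud : ∀ x z : X, x ≠ z → a ≤ dist x z) {S T : FP X} (hST : S ≠ T) :
    min M a ≤ dF M S T := by
  have hST' : ¬ ∀ u, u ∈ S.1 ↔ u ∈ T.1 :=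
    fun h => hST (Subtype.ext (Finset.ext fun u => h u))
  push_neg at hST'
  obtain ⟨u, hu⟩ := hST'
  unfold dF hausSet
  rcases hu with ⟨hmem, hnot⟩ | ⟨hmem, hmemT⟩
  · refine le_max_of_le_left ?_
    have hbound : min M a ≤ sInf ((fun t => dA M u t) '' (T.1 : Set (SpaceA X))) := by
      refine le_csInf ?_ ?_
      · obtain ⟨t0, ht0⟩ := T.2
        exact ⟨_, Set.mem_image_of_mem _ ht0⟩
      · rintro r ⟨t, htmem, rfl⟩
        refine my_dA_sep hM ha hud fun h => ?_
        exact hnot (h ▸ (Finset.mem_coe.mp htmem))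
    refine hbound.trans (le_csSup (S.1.finite_toSet.image _).bddAbove
      (Set.mem_image_of_mem _ hmem))
  · refine le_max_of_le_right ?_
    have hbound : min M a ≤ sInf ((fun s => dA M s u) '' (S.1 : Set (SpaceA X))) := by
      refine le_csInf ?_ ?_
      · obtain ⟨s0, hs0⟩ := S.2
        exact ⟨_, Set.mem_image_of_mem _ hs0⟩
      · rintro r ⟨s, hsmem, rfl⟩
        refine my_dA_sep hM ha hud fun h => ?_
        exact hmem (h ▸ (Finset.mem_coe.mp hsmem))
    refine hbound.trans (le_csSup (T.1.finite_toSet.image _).bddAbove (Set.mem_image_of_mem _ hmemT))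

private def chainSet (M : ℝ) (α β : GSp X) : Set ℝ :=
  {r : ℝ | ∃ (n : ℕ) (p q : ℕ → FP X),
    Quotient.mk (GRel X) (q 0) = α ∧ Quotient.mk (GRel X) (p (n + 1)) = β ∧
    (∀ i, 1 ≤ i → i ≤ n → (GRel X).r (p i) (q i)) ∧
    r = ∑ i ∈ Finset.range (n + 1), dF M (q i) (p (i + 1))}

private lemma dG_eq (M : ℝ) (α β : GSp X) : dG M α β = sInf (chainSet M α β) := rfl

private lemma single_mem (M : ℝ) (a b : FP X) :
    dF M a b ∈ chainSet M (Quotient.mk (GRel X) a) (Quotient.mk (GRel X) b) :=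
  ⟨0, fun _ => b, fun _ => a, rfl, rfl, fun i h1 h2 => absurd (h1.trans h2) (by omega),
    by simp⟩

private lemma chainSet_nonempty (M : ℝ) (α β : GSp X) : (chainSet M α β).Nonempty := by
  obtain ⟨a, rfl⟩ := Quotient.exists_rep α
  obtain ⟨b, rfl⟩ := Quotient.exists_rep β
  exact ⟨_, single_mem M a b⟩

private lemma chain_nonneg {M : ℝ} (hM : 0 ≤ M) {α β : GSp X} {r : ℝ}
    (hr : r ∈ chainSet M α β) : 0 ≤ r := by
  obtain ⟨n, p, q, _, _, _, rfl⟩ := hr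
  exact Finset.sum_nonneg fun i _ => my_dF_nonneg hM _ _

private lemma chainSet_bdd {M : ℝ} (hM : 0 ≤ M) (α β : GSp X) :
    BddBelow (chainSet M α β) := ⟨0, fun r hr => chain_nonneg hM hr⟩

private lemma my_dG_nonneg {M : ℝ} (hM : 0 ≤ M) (α β : GSp X) : 0 ≤ dG M α β :=
  Real.sInf_nonneg fun _ hr => chain_nonneg hM hr

private lemma my_dG_self {M : ℝ} (hM : 0 ≤ M) (α : GSp X) : dG M α α = 0 := by
  refine le_antisymm ?_ (my_dG_nonneg hM α α)
  obtain ⟨a, rfl⟩ := Quotient.exists_rep α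
  have hmem := single_mem M a a
  rw [my_dF_self hM] at hmem
  exact csInf_le (chainSet_bdd hM _ _) hmem

private lemma chain_rev {M : ℝ} {α β : GSp X} {r : ℝ} (hr : r ∈ chainSet M α β) :
    r ∈ chainSet M β α := by
  obtain ⟨n, p, q, hq0, hp1, hrel, rfl⟩ := hr
  refine ⟨n, fun i => q (n + 1 - i), fun i => p (n + 1 - i), by simpa using hp1,
    by simpa using hq0, ?_, ?_⟩
  · intro i h1 h2
    exact (GRel X).iseqv.symm (hrel (n + 1 - i) (by omega) (by omega))
  · nth_rewrite 2 [← Finset.sum_range_reflect]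
    refine Finset.sum_congr rfl fun j hj => ?_
    simp only [Finset.mem_range] at hj
    have e1 : n + 1 - (n + 1 - 1 - j) = j + 1 := by omega
    have e2 : n + 1 - (n + 1 - 1 - j + 1) = j := by omega
    simp only [e1, e2]
    exact my_dF_symm M _ _

private lemma my_dG_symm (M : ℝ) (α β : GSp X) : dG M α β = dG M β α := by
  rw [dG_eq, dG_eq]
  congr 1
  exact Set.eq_of_subset_of_subset (fun r => chain_rev) (fun r => chain_rev)

private lemma chain_concat {M : ℝ} {α β γ : GSp X} {r1 r2 : ℝ}
    (h1 : r1 ∈ chainSet M α β) (h2 : r2 ∈ chainSet M β γ) :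
    r1 + r2 ∈ chainSet M α γ := by
  obtain ⟨n, p, q, hq0, hpn, hrel, rfl⟩ := h1
  obtain ⟨m, p', q', hq0', hpm, hrel', rfl⟩ := h2
  refine ⟨n + m + 1,
    (fun i => if i ≤ n + 1 then p i else p' (i - (n + 1))),
    (fun i => if i ≤ n then q i else q' (i - (n + 1))), by simpa using hq0, ?_, ?_, ?_⟩
  · simp only []
    rw [if_neg (by omega : ¬ (n + m + 1 + 1 ≤ n + 1))]
    rw [show n + m + 1 + 1 - (n + 1) = m + 1 by omega]
    exact hpm
  · intro i hi1 hi2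
    simp only []
    by_cases h : i ≤ n
    · rw [if_pos (by omega : i ≤ n + 1), if_pos h]
      exact hrel i hi1 h
    · by_cases h' : i = n + 1
      · subst h'
        rw [if_pos le_rfl, if_neg h, show n + 1 - (n + 1) = 0 by omega]
        exact Quotient.exact (hpn.trans hq0'.symm)
      · rw [if_neg (by omega), if_neg h]
        exact hrel' (i - (n + 1)) (by omega) (by omega)
  · rw [show n + m + 1 + 1 = n + 1 + (m + 1) by omega]
    rw [Finset.sum_range_add
      (fun i => dF M (if i ≤ n then q i else q' (i - (n + 1)))
        (if i + 1 ≤ n + 1 then p (i + 1) else p' (i + 1 - (n + 1)))) (n + 1) (m + 1)]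
    congr 1
    · refine Finset.sum_congr rfl fun i hi => ?_
      simp only [Finset.mem_range] at hi
      rw [if_pos (by omega : i ≤ n), if_pos (by omega : i + 1 ≤ n + 1)]
    · refine Finset.sum_congr rfl fun j hj => ?_
      simp only [Finset.mem_range] at hj
      rw [if_neg (by omega : ¬ (n + 1 + j ≤ n)),
        if_neg (by omega : ¬ (n + 1 + j + 1 ≤ n + 1))]
      rw [show n + 1 + j - (n + 1) = j by omega,
        show n + 1 + j + 1 - (n + 1) = j + 1 by omega]

private lemma my_dG_triangle {M : ℝ} (hM : 0 ≤ M) (α β γ : GSp X) :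
    dG M α γ ≤ dG M α β + dG M β γ := by
  refine le_of_forall_pos_le_add fun ε hε => ?_
  obtain ⟨r1, hr1, hr1'⟩ := Real.lt_sInf_add_pos (chainSet_nonempty M α β) (half_pos hε)
  obtain ⟨r2, hr2, hr2'⟩ := Real.lt_sInf_add_pos (chainSet_nonempty M β γ) (half_pos hε)
  have hmem := chain_concat hr1 hr2
  have hle : dG M α γ ≤ r1 + r2 := csInf_le (chainSet_bdd hM _ _) hmem
  rw [dG_eq M α β, dG_eq M β γ]
  linarith

private lemma chain_ge {M a : ℝ} (hM : 0 < M) (ha : 0 < a)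
    (hud : ∀ x z : X, x ≠ z → a ≤ dist x z) {α β : GSp X} (hne : α ≠ β) {r : ℝ}
    (hr : r ∈ chainSet M α β) : min M a ≤ r := by
  obtain ⟨n, p, q, hq0, hpn, hrel, rfl⟩ := hr
  by_contra hlt
  push_neg at hlt
  have hterm : ∀ i ∈ Finset.range (n + 1), dF M (q i) (p (i + 1)) < min M a := by
    intro i hi
    refine lt_of_le_of_lt ?_ hlt
    exact Finset.single_le_sum (f := fun i => dF M (q i) (p (i + 1)))
      (fun j _ => my_dF_nonneg hM.le _ _) hi
  have heq : ∀ i ∈ Finset.range (n + 1), q i = p (i + 1) := by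
    intro i hi
    by_contra hne'
    exact absurd (hterm i hi) (not_lt.mpr (my_dF_sep hM ha hud hne'))
  have key : ∀ k, k ≤ n → Quotient.mk (GRel X) (q k) = α := by
    intro k
    induction k with
    | zero => intro _; exact hq0
    | succ k ih =>
      intro hk
      have h1 : Quotient.mk (GRel X) (q k) = α := ih (by omega)
      have h2 : q k = p (k + 1) := heq k (by simp only [Finset.mem_range]; omega)
      have h3 : Quotient.mk (GRel X) (p (k + 1)) = Quotient.mk (GRel X) (q (k + 1)) :=
        Quotient.sound (hrel (k + 1) (by omega) hk)
      rw [← h3, ← h2, h1]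
  have hq0n : q n = p (n + 1) := heq n (by simp)
  have : α = β := by rw [← key n le_rfl, hq0n, hpn]
  exact hne this

end StmtHelpers

/-- For `d` bounded with `(sup d)/M ≤ 2` and uniformly discrete, the quotient
pseudometric `d_G` is a metric on `G`, it is uniformly discrete, and it is a
complete metric on `G`. -/
theorem stmt_19 {X : Type*} [MetricSpace X] [Nontrivial X] (M : ℝ) (hM : 0 < M)
    (hbdd : ∃ B : ℝ, ∀ x y : X, dist x y ≤ B) (htheta : supD X / M ≤ 2)
    (hud : ∃ a : ℝ, 0 < a ∧ ∀ x z : X, x ≠ z → a ≤ dist x z) :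
    IsMetric (dG (X := X) M) ∧
    (∃ b : ℝ, 0 < b ∧ ∀ e f : GSp X, e ≠ f → b ≤ dG M e f) ∧
    IsCompleteWith (dG (X := X) M) := by
  obtain ⟨a, ha, hud'⟩ := hud
  have hε : 0 < min M a := lt_min hM ha
  have hdisc : ∀ e f : GSp X, e ≠ f → min M a ≤ dG M e f := by
    intro e f hef
    rw [dG_eq]
    exact le_csInf (chainSet_nonempty M e f) fun r hr => chain_ge hM ha hud' hef hr
  refine ⟨⟨?_, my_dG_symm M, my_dG_triangle hM.le⟩, ⟨min M a, hε, hdisc⟩, ?_⟩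
  · intro x y
    constructor
    · intro h
      by_contra hne
      have := hdisc x y hne
      rw [h] at this
      linarith
    · rintro rfl
      exact my_dG_self hM.le x
  · intro S hS
    obtain ⟨N, hN⟩ := hS (min M a) hε
    refine ⟨S N, fun ε' hε' => ⟨N, fun n hn => ?_⟩⟩
    have hSn : S n = S N := by
      by_contra hne
      exact absurd (hN n hn N le_rfl) (not_lt.mpr (hdisc _ _ hne))
    rw [hSn, my_dG_self hM.le]
    exact hε'
end
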